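/- Let I be a finite set, (Y_n^i) adapted {0,1}-valued processes with Σ_{i∈I} Y_n^i = 1 for all n, and (X_n^i) integrable adapted processes such that Y_n^i = 1 implies X_n^i = max_{j∈I} X_n^j. Define the predictable compensator increments ΔY_k^{i,p} = E[Y_k^i − Y_{k−1}^i | F_{k−1}]. Then for every n ≥ 1, Σ_{i∈I} Σ_{k=1}^n E[ X_{k−1}^i (Y_k^i − Y_{k−1}^i) | F_{k−1} ] ≤ 0 almost surely; that is, Σ_{i∈I} Σ_{k=1}^n X_{k−1}^i ΔY_k^{i,p} ≤ 0 a.s. -/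

import Mathlib

/-!
Fix `k ≥ 1` and `ω`. Since `Σ_i Y^i_k = 1` with `Y^i_k ∈ {0,1}`, the sum `Σ_i X^i_{k-1} Y^i_k` is a
convex combination of the `X^i_{k-1}`, hence at most `max_j X^j_{k-1}`, while
`Σ_i X^i_{k-1} Y^i_{k-1} = max_j X^j_{k-1}` because `Y_{k-1}` selects the argmax. So
`Σ_i X^i_{k-1} (Y^i_k − Y^i_{k-1}) ≤ 0` pointwise, and conditional expectation, being linear and
monotone, preserves this sign almost surely.
-/

open MeasureTheory

section ConvexCombination

variable {ι : Type*} [Fintype ι] (f g : ι → ℝ)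

theorem sum_mul_le_ciSup_of_sum_eq_one (hg : ∀ i, 0 ≤ g i) (hsum : ∑ i, g i = 1) :
    ∑ i, f i * g i ≤ ⨆ i, f i :=
  calc ∑ i, f i * g i ≤ ∑ i, (⨆ j, f j) * g i :=
        Finset.sum_le_sum fun i _ =>
          mul_le_mul_of_nonneg_right (le_ciSup (Set.finite_range f).bddAbove i) (hg i)
    _ = ⨆ i, f i := by rw [← Finset.mul_sum, hsum, mul_one]

theorem sum_mul_eq_ciSup_of_selects_argmax (hg : ∀ i, g i = 0 ∨ g i = 1)
    (hsum : ∑ i, g i = 1) (hsel : ∀ i, g i = 1 → f i = ⨆ j, f j) :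
    ∑ i, f i * g i = ⨆ i, f i :=
  calc ∑ i, f i * g i = ∑ i, (⨆ j, f j) * g i := by
        refine Finset.sum_congr rfl fun i _ => ?_
        rcases hg i with h | h
        · simp [h]
        · rw [hsel i h]
    _ = ⨆ i, f i := by rw [← Finset.mul_sum, hsum, mul_one]

theorem sum_mul_sub_nonpos_of_selects_argmax (g' : ι → ℝ) (hg : ∀ i, g i = 0 ∨ g i = 1)
    (hg' : ∀ i, g' i = 0 ∨ g' i = 1) (hsum : ∑ i, g i = 1) (hsum' : ∑ i, g' i = 1)
    (hsel : ∀ i, g i = 1 → f i = ⨆ j, f j) :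
    ∑ i, f i * (g' i - g i) ≤ 0 := by
  have hle := sum_mul_le_ciSup_of_sum_eq_one f g'
    (fun i => by rcases hg' i with h | h <;> simp [h]) hsum'
  have heq := sum_mul_eq_ciSup_of_selects_argmax f g hg hsum hsel
  simp only [mul_sub, Finset.sum_sub_distrib]
  linarith

end ConvexCombination

theorem ae_sum_condExp_nonpos {Ω ι : Type*} {m m₀ : MeasurableSpace Ω} {μ : Measure Ω}
    (s : Finset ι) {f : ι → Ω → ℝ} (hf : ∀ i ∈ s, Integrable (f i) μ)
    (hnonpos : ∀ ω, ∑ i ∈ s, f i ω ≤ 0) :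
    ∀ᵐ ω ∂μ, ∑ i ∈ s, μ[f i | m] ω ≤ 0 := by
  have hce : μ[∑ i ∈ s, f i | m] ≤ᵐ[μ] 0 :=
    condExp_nonpos (Filter.Eventually.of_forall fun ω => by simpa using hnonpos ω)
  filter_upwards [condExp_finsetSum hf m, hce] with ω hsum hω
  rwa [← Finset.sum_apply, ← hsum]

theorem integrable_mul_sub_of_zero_one {Ω : Type*} {m : MeasurableSpace Ω} {μ : Measure Ω}
    {x y y' : Ω → ℝ} (hx : Integrable x μ) (hy : StronglyMeasurable y)
    (hy' : StronglyMeasurable y') (hy01 : ∀ ω, y ω = 0 ∨ y ω = 1)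
    (hy'01 : ∀ ω, y' ω = 0 ∨ y' ω = 1) :
    Integrable (fun ω => x ω * (y' ω - y ω)) μ :=
  hx.mul_bdd (c := 1) (hy'.sub hy).aestronglyMeasurable <| Filter.Eventually.of_forall fun ω => by
    rcases hy01 ω with h | h <;> rcases hy'01 ω with h' | h' <;> simp [h, h']

theorem stmt6_general {Ω ι : Type*} [Fintype ι] {m : MeasurableSpace Ω}
    (μ : Measure Ω) (ℱ : Filtration ℕ m)
    (X Y : ι → ℕ → Ω → ℝ)
    (hXint : ∀ i n, Integrable (X i n) μ)
    (hYadapted : ∀ i n, StronglyMeasurable[ℱ n] (Y i n))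
    (hY01 : ∀ i n ω, Y i n ω = 0 ∨ Y i n ω = 1)
    (hYsum : ∀ n ω, ∑ i, Y i n ω = 1)
    (hYsel : ∀ i n ω, Y i n ω = 1 → X i n ω = ⨆ j, X j n ω) :
    ∀ n : ℕ, 1 ≤ n → ∀ᵐ ω ∂μ,
      ∑ i, ∑ k ∈ Finset.Icc 1 n,
        (μ[fun ω' => X i (k - 1) ω' * (Y i k ω' - Y i (k - 1) ω') | ℱ (k - 1)]) ω ≤ 0 := by
  intro n _
  have hstep : ∀ k, ∀ᵐ ω ∂μ, ∑ i,
      (μ[fun ω' => X i (k - 1) ω' * (Y i k ω' - Y i (k - 1) ω') | ℱ (k - 1)]) ω ≤ 0 := fun k =>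
    ae_sum_condExp_nonpos _
      (fun i _ => integrable_mul_sub_of_zero_one (hXint i (k - 1))
        ((hYadapted i (k - 1)).mono (ℱ.le _)) ((hYadapted i k).mono (ℱ.le _))
        (hY01 i (k - 1)) (hY01 i k))
      (fun ω => sum_mul_sub_nonpos_of_selects_argmax (fun i => X i (k - 1) ω)
        (fun i => Y i (k - 1) ω) (fun i => Y i k ω) (fun i => hY01 i (k - 1) ω)
        (fun i => hY01 i k ω) (hYsum (k - 1) ω) (hYsum k ω) (fun i => hYsel i (k - 1) ω))
  filter_upwards [ae_all_iff.2 hstep] with ω hω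
  rw [Finset.sum_comm]
  exact Finset.sum_nonpos fun k _ => hω k

/-- The key sign observation in the proof of the OMI: if `(Y^i)` is an adapted `{0,1}`-valued
selection of the argmax of the integrable adapted processes `(X^i)` with `Σ_i Y^i_n = 1`, then
`Σ_i Σ_{k=1}^n E[X^i_{k-1}(Y^i_k − Y^i_{k-1}) | F_{k-1}] ≤ 0` almost surely. -/
theorem stmt6 {Ω ι : Type*} [Fintype ι] [Nonempty ι] {m : MeasurableSpace Ω}
    (μ : Measure Ω) [IsProbabilityMeasure μ] (ℱ : Filtration ℕ m)
    (X Y : ι → ℕ → Ω → ℝ)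
    (hXadapted : ∀ i n, StronglyMeasurable[ℱ n] (X i n))
    (hXint : ∀ i n, Integrable (X i n) μ)
    (hYadapted : ∀ i n, StronglyMeasurable[ℱ n] (Y i n))
    (hY01 : ∀ i n ω, Y i n ω = 0 ∨ Y i n ω = 1)
    (hYsum : ∀ n ω, ∑ i, Y i n ω = 1)
    (hYsel : ∀ i n ω, Y i n ω = 1 → X i n ω = ⨆ j, X j n ω) :
    ∀ n : ℕ, 1 ≤ n → ∀ᵐ ω ∂μ,
      ∑ i, ∑ k ∈ Finset.Icc 1 n,
        (μ[fun ω' => X i (k - 1) ω' * (Y i k ω' - Y i (k - 1) ω') | ℱ (k - 1)]) ω ≤ 0 :=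
  stmt6_general μ ℱ X Y hXint hYadapted hY01 hYsum hYsel
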